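/- arXiv:1005.1694 — 2 statements merged into one kernel-verified Lean document; each statement's English description precedes it below -/
import Mathlib

section
/- Let f : ℕ → ℕ and define g : ℕ → ℕ by g(2k−1) = ⌊f(k)/2⌋ and g(2k) = ⌈f(k)/2⌉. If liminf f*(t)/t > 3, then liminf g*(t)/t > 3/2, where h* denotes partial sums. -/
/-!
Pairing the times `2k - 1, 2k` shows that the partial sums of `g` at even times are those of `f`:
`g*(2s) = f*(s)`. Since `g*` is monotone, `g*(t) ≥ f*(⌊t/2⌋) ≥ c ⌊t/2⌋ ≥ c (t - 1) / 2` once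
`f*(s) ≥ c s`, so `g*(t)/t` has liminf at least `c/2` for every `c < liminf f*(t)/t`.
The even times also keep `g*(t)/t` frequently bounded, so that its real liminf is not a junk value.
-/

open Filter Finset

theorem Finset.sum_Icc_one_two_mul {M : Type*} [AddCommMonoid M] {f g : ℕ → M}
    (h : ∀ k ≥ 1, g (2 * k - 1) + g (2 * k) = f k) (s : ℕ) :
    ∑ τ ∈ Icc 1 (2 * s), g τ = ∑ k ∈ Icc 1 s, f k := by
  induction s with
  | zero => simp
  | succ s ih =>
    have hs := h (s + 1) (by omega)
    rw [show 2 * (s + 1) - 1 = 2 * s + 1 by omega] at hs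
    rw [show 2 * (s + 1) = 2 * s + 1 + 1 by ring, sum_Icc_succ_top (by omega),
      sum_Icc_succ_top (by omega), ih, sum_Icc_succ_top (by omega), add_assoc, ← hs]
    rfl

theorem Real.isCoboundedUnder_ge_of_lt_liminf {α : Type*} {l : Filter α} {u : α → ℝ} {a : ℝ}
    (ha : 0 ≤ a) (h : a < liminf u l) : l.IsCoboundedUnder (· ≥ ·) u := by
  by_contra hu
  rw [Real.liminf_of_not_isCoboundedUnder hu] at h
  exact h.not_ge ha

section PartialSums

variable {F G : ℕ → ℕ}

theorem eventually_le_cast_div_of_monotone (hG : Monotone G) (hGF : ∀ s, G (2 * s) = F s)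
    {c : ℝ} (hc : 0 ≤ c) (hF : ∀ᶠ s in atTop, c * s ≤ F s) :
    ∀ᶠ t : ℕ in atTop, c / 2 * (1 - 1 / t) ≤ (G t : ℝ) / t := by
  filter_upwards [(Nat.tendsto_div_const_atTop two_ne_zero).eventually hF,
    eventually_gt_atTop 0] with t hFt ht
  have hts : (t : ℝ) ≤ 2 * ↑(t / 2) + 1 := by exact_mod_cast (by omega : t ≤ 2 * (t / 2) + 1)
  have hGt : (F (t / 2) : ℝ) ≤ G t := by
    rw [← hGF]; exact_mod_cast hG (Nat.mul_div_le t 2)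
  rw [le_div_iff₀ (by positivity)]
  calc c / 2 * (1 - 1 / t) * t = c * ((t - 1) / 2) := by field_simp
    _ ≤ c * ↑(t / 2) := by gcongr; linarith
    _ ≤ G t := hFt.trans hGt

theorem div_two_lt_liminf_cast_div_of_monotone (hG : Monotone G) (hGF : ∀ s, G (2 * s) = F s)
    {a : ℝ} (ha : 0 ≤ a) (hF : a < liminf (fun t : ℕ => (F t : ℝ) / t) atTop) :
    a / 2 < liminf (fun t : ℕ => (G t : ℝ) / t) atTop := by
  obtain ⟨c, hac, hcF⟩ := exists_between hF
  have hc : 0 ≤ c := ha.trans hac.le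
  have hFc : ∀ᶠ s in atTop, c * s ≤ F s := by
    filter_upwards [eventually_lt_of_lt_liminf hcF (isBoundedUnder_of_eventually_ge
      (Eventually.of_forall fun t => by positivity)), eventually_gt_atTop 0] with s hs hs0
    exact ((lt_div_iff₀ (by positivity)).1 hs).le
  obtain ⟨b, hb⟩ := (Real.isCoboundedUnder_ge_of_lt_liminf ha hF).frequently_le
  have hGb : ∃ᶠ t in atTop, (G t : ℝ) / t ≤ b / 2 := by
    refine (tendsto_id.const_mul_atTop' two_pos).frequently (hb.mono fun s hs => ?_)
    rw [id, hGF, Nat.cast_mul, Nat.cast_two, mul_comm, ← div_div]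
    linarith
  have hlim : Tendsto (fun t : ℕ => c / 2 * (1 - 1 / (t : ℝ))) atTop (nhds (c / 2)) := by
    simpa using ((tendsto_one_div_atTop_nhds_zero_nat (𝕜 := ℝ)).const_sub 1).const_mul (c / 2)
  calc a / 2 < c / 2 := by linarith
    _ = liminf (fun t : ℕ => c / 2 * (1 - 1 / (t : ℝ))) atTop := hlim.liminf_eq.symm
    _ ≤ _ := liminf_le_liminf (eventually_le_cast_div_of_monotone hG hGF hc hFc)
        hlim.isBoundedUnder_ge (IsCoboundedUnder.of_frequently_le hGb)

end PartialSums

theorem stmt_9 (f g : ℕ → ℕ)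
    (hg : ∀ k : ℕ, k ≥ 1 → g (2 * k - 1) = f k / 2 ∧ g (2 * k) = (f k + 1) / 2)
    (hf : Filter.liminf (fun t : ℕ => ((∑ τ ∈ Finset.Icc 1 t, f τ : ℕ) : ℝ) / t)
        Filter.atTop > 3) :
    Filter.liminf (fun t : ℕ => ((∑ τ ∈ Finset.Icc 1 t, g τ : ℕ) : ℝ) / t)
      Filter.atTop > 3 / 2 := by
  have hpair : ∀ k ≥ 1, g (2 * k - 1) + g (2 * k) = f k := fun k hk => by
    rw [(hg k hk).1, (hg k hk).2]
    omega
  have hmono : Monotone fun t => ∑ τ ∈ Icc 1 t, g τ := fun _ _ hst =>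
    sum_le_sum_of_subset (Icc_subset_Icc_right hst)
  exact div_two_lt_liminf_cast_div_of_monotone hmono (sum_Icc_one_two_mul hpair) (by norm_num) hf
end

section
/- For every r ≥ 1 and m ≥ 1 (natural numbers), the following inequalities hold: f*(2r) ≥ 6r+1, f*(6rm+1) ≥ 18rm+6r+4, f*(6rm²+10rm) ≥ 18rm²+36rm+10r, and f*(12rm²+30rm) ≥ 36rm²+102rm+30r, whenever f : ℕ → ℕ satisfies f*(mk+1) > 3mk + 3m + k for all k ∈ ℕ and f* is monotone nondecreasing with f*(t) ≥ 3t + 1 for all t ≥ 1. -/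
open Finset

/-- Partial sums of an `ℕ`-valued function are monotone, so the bound at `m * k + 1` persists up to
`m * (k + 1)`. -/
theorem le_sum_Icc_mul (f : ℕ → ℕ) {m n : ℕ} (hm : 1 ≤ m) (hn : 1 ≤ n)
    (h1 : ∀ k : ℕ, (∑ τ ∈ Icc 1 (m * k + 1), f τ) > 3 * m * k + 3 * m + k) :
    3 * m * n + n ≤ ∑ τ ∈ Icc 1 (m * n), f τ := by
  obtain ⟨k, rfl⟩ : ∃ k, n = k + 1 := ⟨n - 1, by omega⟩
  calc 3 * m * (k + 1) + (k + 1) ≤ ∑ τ ∈ Icc 1 (m * k + 1), f τ := by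
        have := h1 k
        linarith
    _ ≤ ∑ τ ∈ Icc 1 (m * (k + 1)), f τ :=
      sum_le_sum_of_subset (Icc_subset_Icc_right (by rw [mul_add_one]; omega))

theorem stmt_13_general (f : ℕ → ℕ) (r m : ℕ) (hr : r ≥ 1) (hm : m ≥ 1)
    (h1 : ∀ k : ℕ, (∑ τ ∈ Finset.Icc 1 (m * k + 1), f τ) > 3 * m * k + 3 * m + k)
    (h3 : ∀ t : ℕ, t ≥ 1 → (∑ τ ∈ Finset.Icc 1 t, f τ) ≥ 3 * t + 1) :
    (∑ τ ∈ Finset.Icc 1 (2 * r), f τ) ≥ 6 * r + 1 ∧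
    (∑ τ ∈ Finset.Icc 1 (6 * r * m + 1), f τ) ≥ 18 * r * m + 6 * r + 4 ∧
    (∑ τ ∈ Finset.Icc 1 (6 * r * m ^ 2 + 10 * r * m), f τ)
      ≥ 18 * r * m ^ 2 + 36 * r * m + 10 * r ∧
    (∑ τ ∈ Finset.Icc 1 (12 * r * m ^ 2 + 30 * r * m), f τ)
      ≥ 36 * r * m ^ 2 + 102 * r * m + 30 * r := by
  refine ⟨?_, ?_, ?_, ?_⟩
  · have := h3 (2 * r) (by omega)
    omega
  · have := h1 (6 * r)
    rw [show m * (6 * r) + 1 = 6 * r * m + 1 by ring] at this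
    linarith
  · rw [show 6 * r * m ^ 2 + 10 * r * m = m * (6 * r * m + 10 * r) by ring]
    have := le_sum_Icc_mul f hm (n := 6 * r * m + 10 * r) (by omega) h1
    linarith
  · rw [show 12 * r * m ^ 2 + 30 * r * m = m * (12 * r * m + 30 * r) by ring]
    have := le_sum_Icc_mul f hm (n := 12 * r * m + 30 * r) (by omega) h1
    linarith

theorem stmt_13 (f : ℕ → ℕ) (r m : ℕ) (hr : r ≥ 1) (hm : m ≥ 1)
    (h1 : ∀ k : ℕ, (∑ τ ∈ Finset.Icc 1 (m * k + 1), f τ) > 3 * m * k + 3 * m + k)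
    (h2 : Monotone (fun t : ℕ => ∑ τ ∈ Finset.Icc 1 t, f τ))
    (h3 : ∀ t : ℕ, t ≥ 1 → (∑ τ ∈ Finset.Icc 1 t, f τ) ≥ 3 * t + 1) :
    (∑ τ ∈ Finset.Icc 1 (2 * r), f τ) ≥ 6 * r + 1 ∧
    (∑ τ ∈ Finset.Icc 1 (6 * r * m + 1), f τ) ≥ 18 * r * m + 6 * r + 4 ∧
    (∑ τ ∈ Finset.Icc 1 (6 * r * m ^ 2 + 10 * r * m), f τ)
      ≥ 18 * r * m ^ 2 + 36 * r * m + 10 * r ∧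
    (∑ τ ∈ Finset.Icc 1 (12 * r * m ^ 2 + 30 * r * m), f τ)
      ≥ 36 * r * m ^ 2 + 102 * r * m + 30 * r :=
  stmt_13_general f r m hr hm h1 h3
end
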